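/- arXiv:2509.12631 — 10 statements merged into one kernel-verified Lean document; each statement's English description precedes it below -/
import Mathlib

section
/- Let λ > 0 and α > 1 be real numbers, and let m be a natural number with (m : ℝ) ≥ α·λ. Then the Poisson tail satisfies ∑_{k=m}^∞ poissonPMFReal λ k ≤ (α/(α−1)) · poissonPMFReal λ m; that is, the probability that a Poisson random variable with rate λ is at least m is at most 1/(1 − α⁻¹) times the probability that it equals m. -/
/-- The Poisson probability mass function with real rate `l`:
`poissonPMFReal l n = exp (-l) * l ^ n / n !`. -/
noncomputable def poissonPMFReal (l : ℝ) (n : ℕ) : ℝ :=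
  Real.exp (-l) * l ^ n / n.factorial

lemma fact_mul_pow_le (m k : ℕ) : (m.factorial * m ^ k : ℝ) ≤ (m + k).factorial := by
  induction k with
  | zero => simp
  | succ k ih =>
    have h1 : (m : ℝ) ≤ (m + k + 1 : ℕ) := by push_cast; linarith
    calc (m.factorial * m ^ (k+1) : ℝ) = (m.factorial * m ^ k) * m := by ring
    _ ≤ ((m + k).factorial : ℝ) * (m + k + 1 : ℕ) := by
        apply mul_le_mul ih h1 (by positivity) (by positivity)
    _ = ((m + k + 1).factorial : ℝ) := by
        rw [Nat.factorial_succ]; push_cast; ring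

/-- If `m ≥ α·λ` with `α > 1`, the Poisson tail `∑_{k=m}^∞ poissonPMFReal λ k` is at
most `α/(α−1)` times the pmf at `m`. -/
theorem poisson_tail_le (l α : ℝ) (hl : 0 < l) (hα : 1 < α) (m : ℕ)
    (hm : (m : ℝ) ≥ α * l) :
    (∑' k : ℕ, poissonPMFReal l (m + k)) ≤ (α / (α - 1)) * poissonPMFReal l m := by
  have hα0 : (0:ℝ) < α := lt_trans one_pos hα
  have hm0 : (0:ℝ) < m := lt_of_lt_of_le (by nlinarith) hm
  have hr0 : (0:ℝ) ≤ α⁻¹ := by positivity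
  have hr1 : α⁻¹ < 1 := inv_lt_one_of_one_lt₀ hα
  have hpmf : 0 ≤ poissonPMFReal l m := by
    unfold poissonPMFReal; positivity
  have key : ∀ k : ℕ, poissonPMFReal l (m + k) ≤ poissonPMFReal l m * α⁻¹ ^ k := by
    intro k
    unfold poissonPMFReal
    have hfk : (0:ℝ) < (m + k).factorial := by positivity
    have hfm : (0:ℝ) < m.factorial := by positivity
    have h1 : (l : ℝ) ≤ m * α⁻¹ := by
      rw [mul_comm, inv_mul_eq_div, le_div_iff₀ hα0]
      linarith
    have h2 : l ^ k ≤ (m * α⁻¹) ^ k := pow_le_pow_left₀ hl.le h1 k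
    rw [div_mul_eq_mul_div, div_le_div_iff₀ hfk hfm, pow_add]
    have := fact_mul_pow_le m k
    have hexp : (0:ℝ) < Real.exp (-l) := Real.exp_pos _
    calc Real.exp (-l) * (l ^ m * l ^ k) * (m.factorial : ℝ)
        ≤ Real.exp (-l) * (l ^ m * ((m * α⁻¹) ^ k)) * m.factorial := by
          gcongr
      _ = Real.exp (-l) * l ^ m * α⁻¹ ^ k * (m.factorial * m ^ k) := by
          rw [mul_pow]; ring
      _ ≤ Real.exp (-l) * l ^ m * α⁻¹ ^ k * (m + k).factorial := by
          apply mul_le_mul_of_nonneg_left this (by positivity)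
  have hgeo : Summable (fun k : ℕ => poissonPMFReal l m * α⁻¹ ^ k) :=
    (summable_geometric_of_lt_one hr0 hr1).mul_left _
  have hsum : Summable (fun k : ℕ => poissonPMFReal l (m + k)) := by
    apply Summable.of_nonneg_of_le (fun k => by unfold poissonPMFReal; positivity) key hgeo
  calc (∑' k : ℕ, poissonPMFReal l (m + k))
      ≤ ∑' k : ℕ, poissonPMFReal l m * α⁻¹ ^ k := Summable.tsum_le_tsum key hsum hgeo
    _ = poissonPMFReal l m * (1 - α⁻¹)⁻¹ := by
        rw [tsum_mul_left, tsum_geometric_of_lt_one hr0 hr1]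
    _ = (α / (α - 1)) * poissonPMFReal l m := by
        rw [mul_comm]; congr 1
        field_simp
end

section
/- Let λ > 0 be a real number and let A ≥ 1 be a natural number. Then poissonPMFReal λ A ≤ (e·λ/A)^A, where e is the base of the natural logarithm; that is, the probability that a Poisson random variable with rate λ equals A is at most (eλ/A)^A. -/
lemma pow_self_le_exp_mul_factorial (n : ℕ) :
    (n : ℝ) ^ n ≤ Real.exp 1 ^ n * n.factorial := by
  induction n with
  | zero => simp
  | succ n ih =>
    rcases Nat.eq_zero_or_pos n with h0 | hn
    · subst h0
      simp [Real.one_le_exp (by norm_num : (0:ℝ) ≤ 1)]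
    · have hnR : (0:ℝ) < n := by exact_mod_cast hn
      have key : ((n:ℝ) + 1) ^ n ≤ Real.exp 1 * (n : ℝ) ^ n := by
        have h1 : ((n:ℝ) + 1) = n * (1 + 1 / n) := by field_simp
        have h2 : (1 + 1 / (n:ℝ)) ^ n ≤ Real.exp 1 := by
          have := Real.add_one_le_exp (1 / (n:ℝ))
          calc (1 + 1 / (n:ℝ)) ^ n ≤ Real.exp (1 / n) ^ n := by
                apply pow_le_pow_left₀ (by positivity)
                linarith
            _ = Real.exp 1 := by
                rw [← Real.exp_nat_mul]
                congr 1
                field_simp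
        calc ((n:ℝ) + 1) ^ n = (n:ℝ) ^ n * (1 + 1 / n) ^ n := by
              rw [h1, mul_pow]
          _ ≤ (n:ℝ) ^ n * Real.exp 1 := by
              apply mul_le_mul_of_nonneg_left h2 (by positivity)
          _ = Real.exp 1 * (n:ℝ) ^ n := by ring
      have hfac : (Nat.factorial (n+1) : ℝ) = (n + 1) * n.factorial := by
        push_cast [Nat.factorial_succ]; ring
      calc ((n+1 : ℕ) : ℝ) ^ (n+1) = ((n:ℝ) + 1) ^ n * ((n:ℝ) + 1) := by
            push_cast; ring
        _ ≤ (Real.exp 1 * (n : ℝ) ^ n) * ((n:ℝ) + 1) := by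
            apply mul_le_mul_of_nonneg_right key (by positivity)
        _ ≤ (Real.exp 1 * (Real.exp 1 ^ n * n.factorial)) * ((n:ℝ) + 1) := by
            apply mul_le_mul_of_nonneg_right _ (by positivity)
            exact mul_le_mul_of_nonneg_left ih (Real.exp_pos 1).le
        _ = Real.exp 1 ^ (n+1) * (Nat.factorial (n+1) : ℝ) := by
            rw [hfac]; ring

/-- The probability that a Poisson random variable with rate `λ` equals `A` is at most
`(e·λ/A)^A`. -/
theorem poisson_pmf_le (l : ℝ) (hl : 0 < l) (A : ℕ) (hA : 1 ≤ A) :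
    poissonPMFReal l A ≤ (Real.exp 1 * l / A) ^ A := by
  have hAR : (0:ℝ) < A := by exact_mod_cast hA
  have hfac : (0:ℝ) < A.factorial := by exact_mod_cast A.factorial_pos
  have h1 : poissonPMFReal l A ≤ l ^ A / A.factorial := by
    unfold poissonPMFReal
    gcongr ?_ / _
    · calc Real.exp (-l) * l ^ A ≤ 1 * l ^ A := by
            apply mul_le_mul_of_nonneg_right _ (by positivity)
            exact Real.exp_le_one_iff.mpr (by linarith)
        _ = l ^ A := one_mul _
  refine h1.trans ?_
  rw [div_pow, mul_pow]
  rw [div_le_div_iff₀ hfac (by positivity)]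
  have := pow_self_le_exp_mul_factorial A
  calc l ^ A * (A:ℝ) ^ A ≤ l ^ A * (Real.exp 1 ^ A * A.factorial) :=
        mul_le_mul_of_nonneg_left this (by positivity)
    _ = Real.exp 1 ^ A * l ^ A * A.factorial := by ring
end

section
/- Let λ > 0 be a real number and let A ≥ 1 be a natural number with (A : ℝ) ≥ e·λ, where e is the base of the natural logarithm. Then the Poisson tail satisfies ∑_{k=A}^∞ poissonPMFReal λ k ≤ (e/(e−1)) · (e·λ/A)^A. -/
lemma factorial_pow_le (A k : ℕ) : (A.factorial : ℝ) * A ^ k ≤ (A + k).factorial := by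
  induction k with
  | zero => simp
  | succ k ih =>
    have : (A + (k+1)).factorial = (A + k + 1) * (A + k).factorial := by
      rw [← Nat.add_assoc]; exact Nat.factorial_succ _
    rw [this]
    push_cast
    calc (A.factorial : ℝ) * A ^ (k+1) = ((A.factorial : ℝ) * A ^ k) * A := by ring
    _ ≤ ((A + k).factorial : ℝ) * A := by
        apply mul_le_mul_of_nonneg_right ih (by positivity)
    _ ≤ ((A : ℝ) + k + 1) * (A + k).factorial := by
        rw [mul_comm]
        apply mul_le_mul_of_nonneg_right _ (by positivity)
        linarith [Nat.cast_nonneg (α := ℝ) k]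

/-- If `A ≥ e·λ`, the Poisson tail `∑_{k=A}^∞ poissonPMFReal λ k` is at most
`(e/(e−1)) · (e·λ/A)^A`. -/
theorem poisson_tail_stirling_le (l : ℝ) (hl : 0 < l) (A : ℕ) (hA : 1 ≤ A)
    (hAl : (A : ℝ) ≥ Real.exp 1 * l) :
    (∑' k : ℕ, poissonPMFReal l (A + k)) ≤
      (Real.exp 1 / (Real.exp 1 - 1)) * (Real.exp 1 * l / A) ^ A := by
  have hApos : (0 : ℝ) < A := by exact_mod_cast hA
  have he : (1 : ℝ) < Real.exp 1 := by
    have := Real.add_one_le_exp (1 : ℝ); linarith [Real.exp_pos (1:ℝ)]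
  set r : ℝ := l / A with hr
  have hr0 : 0 ≤ r := by positivity
  have hrm : r * Real.exp 1 ≤ 1 := by
    rw [hr, div_mul_eq_mul_div, div_le_one hApos]
    linarith [hAl]
  have hr1 : r < 1 := by nlinarith [Real.exp_pos (1:ℝ)]
  have h1r : 0 < 1 - r := by linarith
  set C : ℝ := Real.exp (-l) * l ^ A / A.factorial with hC
  have hC0 : 0 ≤ C := by positivity
  -- termwise bound
  have hterm : ∀ k : ℕ, poissonPMFReal l (A + k) ≤ C * r ^ k := by
    intro k
    have hrhs : C * r ^ k = Real.exp (-l) * l ^ (A + k) / ((A.factorial : ℝ) * A ^ k) := by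
      rw [hC, hr, div_pow, pow_add]
      field_simp
    rw [poissonPMFReal, hrhs]
    gcongr
    exact factorial_pow_le A k
  have hgeo : Summable fun k : ℕ => C * r ^ k :=
    (summable_geometric_of_lt_one hr0 hr1).mul_left C
  have hpos : ∀ k : ℕ, 0 ≤ poissonPMFReal l (A + k) := by
    intro k; rw [poissonPMFReal]; positivity
  have hsum : Summable fun k : ℕ => poissonPMFReal l (A + k) :=
    Summable.of_nonneg_of_le hpos hterm hgeo
  have h1 : (∑' k : ℕ, poissonPMFReal l (A + k)) ≤ ∑' k : ℕ, C * r ^ k :=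
    Summable.tsum_le_tsum hterm hsum hgeo
  have h2 : (∑' k : ℕ, C * r ^ k) = C * (1 - r)⁻¹ := by
    rw [tsum_mul_left, tsum_geometric_of_lt_one hr0 hr1]
  -- bound C ≤ (e l / A)^A
  have hstir : ((A : ℝ)) ^ A / A.factorial ≤ Real.exp A :=
    Real.pow_div_factorial_le_exp (A:ℝ) (Nat.cast_nonneg A) A
  have hCle : C ≤ (Real.exp 1 * l / A) ^ A := by
    have hexp : Real.exp (-l) ≤ 1 := Real.exp_le_one_iff.mpr (by linarith)
    have hstep : C ≤ l ^ A / A.factorial := by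
      rw [hC]
      apply div_le_div_of_nonneg_right _ (by positivity)
      calc Real.exp (-l) * l ^ A ≤ 1 * l ^ A := by
            apply mul_le_mul_of_nonneg_right hexp (by positivity)
      _ = l ^ A := one_mul _
    apply hstep.trans
    have key : l ^ A / A.factorial = (l / A) ^ A * ((A:ℝ) ^ A / A.factorial) := by
      rw [div_pow]; field_simp
    rw [key]
    have hrw : (Real.exp 1 * l / A) ^ A = (l / A) ^ A * Real.exp 1 ^ A := by
      rw [← mul_pow]; ring_nf
    rw [hrw]
    apply mul_le_mul_of_nonneg_left _ (by positivity)
    calc (A:ℝ) ^ A / A.factorial ≤ Real.exp A := hstir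
    _ = Real.exp 1 ^ A := by rw [← Real.exp_nat_mul, mul_one]
  -- bound (1-r)⁻¹ ≤ e/(e-1)
  have hinv : (1 - r)⁻¹ ≤ Real.exp 1 / (Real.exp 1 - 1) := by
    have hd : (Real.exp 1 - 1) / Real.exp 1 ≤ 1 - r := by
      rw [div_le_iff₀ (Real.exp_pos 1)]
      nlinarith [Real.exp_pos (1:ℝ)]
    have hdpos : 0 < (Real.exp 1 - 1) / Real.exp 1 :=
      div_pos (by linarith) (Real.exp_pos 1)
    calc (1 - r)⁻¹ ≤ ((Real.exp 1 - 1) / Real.exp 1)⁻¹ := by gcongr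
    _ = Real.exp 1 / (Real.exp 1 - 1) := by rw [inv_div]
  calc (∑' k : ℕ, poissonPMFReal l (A + k)) ≤ C * (1 - r)⁻¹ := by rw [← h2]; exact h1
  _ ≤ (Real.exp 1 * l / A) ^ A * (Real.exp 1 / (Real.exp 1 - 1)) := by
      apply mul_le_mul hCle hinv (le_of_lt (inv_pos.mpr h1r)) (by positivity)
  _ = (Real.exp 1 / (Real.exp 1 - 1)) * (Real.exp 1 * l / A) ^ A := mul_comm _ _
end

section
/- Let S, Δ, C be natural numbers with S ≥ 2·C and S ≥ 1. Then the binomial coefficient satisfies (choose (S + Δ) C : ℝ) ≤ (choose S C : ℝ) · (1 + 2·Δ/S)^C, where by the binomial theorem (1 + 2Δ/S)^C = ∑_{i=0}^{C} 2^i · (choose C i) · (Δ/S)^i. -/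
lemma choose_add_le_nat (S Δ : ℕ) : ∀ C : ℕ, 2 * C ≤ S →
    (S + Δ).choose C * S ^ C ≤ S.choose C * (S + 2 * Δ) ^ C := by
  intro C
  induction C with
  | zero => simp
  | succ C ih =>
    intro h
    have hC : 2 * C ≤ S := by omega
    have IH := ih hC
    have hkey : (S + Δ - C) * S ≤ (S - C) * (S + 2 * Δ) := by
      zify [show C ≤ S + Δ by omega, show C ≤ S by omega]
      nlinarith [show (2 * C + 2 : ℤ) ≤ S by exact_mod_cast h]
    have h1 : (S + Δ).choose (C + 1) * (C + 1) = (S + Δ).choose C * (S + Δ - C) :=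
      Nat.choose_succ_right_eq _ _
    have h2 : S.choose (C + 1) * (C + 1) = S.choose C * (S - C) :=
      Nat.choose_succ_right_eq _ _
    have hmul : (S + Δ).choose C * (S + Δ - C) * S ^ (C + 1)
        ≤ S.choose C * (S - C) * (S + 2 * Δ) ^ (C + 1) := by
      calc (S + Δ).choose C * (S + Δ - C) * S ^ (C + 1)
          = ((S + Δ).choose C * S ^ C) * ((S + Δ - C) * S) := by ring
        _ ≤ (S.choose C * (S + 2 * Δ) ^ C) * ((S - C) * (S + 2 * Δ)) :=
            Nat.mul_le_mul IH hkey
        _ = S.choose C * (S - C) * (S + 2 * Δ) ^ (C + 1) := by ring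
    have : (S + Δ).choose (C + 1) * S ^ (C + 1) * (C + 1)
        ≤ S.choose (C + 1) * (S + 2 * Δ) ^ (C + 1) * (C + 1) := by
      calc (S + Δ).choose (C + 1) * S ^ (C + 1) * (C + 1)
          = (S + Δ).choose (C + 1) * (C + 1) * S ^ (C + 1) := by ring
        _ = (S + Δ).choose C * (S + Δ - C) * S ^ (C + 1) := by rw [h1]
        _ ≤ S.choose C * (S - C) * (S + 2 * Δ) ^ (C + 1) := hmul
        _ = S.choose (C + 1) * (C + 1) * (S + 2 * Δ) ^ (C + 1) := by rw [h2]
        _ = S.choose (C + 1) * (S + 2 * Δ) ^ (C + 1) * (C + 1) := by ring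
    exact Nat.le_of_mul_le_mul_right this (Nat.succ_pos C)

/-- Upper first-order expansion of a shifted binomial coefficient: if `S ≥ 2C` and
`S ≥ 1` then `choose (S+Δ) C ≤ choose S C · (1 + 2Δ/S)^C`. -/
theorem choose_add_le (S Δ C : ℕ) (h2C : 2 * C ≤ S) (hS : 1 ≤ S) :
    ((S + Δ).choose C : ℝ) ≤ (S.choose C : ℝ) * (1 + 2 * (Δ : ℝ) / S) ^ C := by
  have hS' : (0 : ℝ) < S := by exact_mod_cast hS
  have key := choose_add_le_nat S Δ C h2C
  have key' : ((S + Δ).choose C : ℝ) * (S : ℝ) ^ C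
      ≤ (S.choose C : ℝ) * ((S : ℝ) + 2 * Δ) ^ C := by exact_mod_cast key
  have hrw : (1 + 2 * (Δ : ℝ) / S) = ((S : ℝ) + 2 * Δ) / S := by
    field_simp
  rw [hrw, div_pow, ← mul_div_assoc, le_div_iff₀ (pow_pos hS' C)]
  linarith
end

section
/- Let S, Δ, C be natural numbers with S ≥ 1. Then the binomial coefficient satisfies (choose (S + Δ) C : ℝ) ≥ (choose S C : ℝ) · (1 + Δ/S)^C, where by the binomial theorem (1 + Δ/S)^C = ∑_{i=0}^{C} (choose C i) · (Δ/S)^i. -/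
lemma descFactorial_aux (S Δ : ℕ) :
    ∀ C, S.descFactorial C * (S + Δ) ^ C ≤ (S + Δ).descFactorial C * S ^ C := by
  intro C
  induction C with
  | zero => simp
  | succ C ih =>
    rw [Nat.descFactorial_succ, Nat.descFactorial_succ, pow_succ, pow_succ]
    have key : (S - C) * (S + Δ) ≤ (S + Δ - C) * S := by
      rcases le_or_gt C S with h | h
      · have h1 : S + Δ - C = (S - C) + Δ := by omega
        rw [h1, Nat.mul_add, Nat.add_mul, Nat.mul_comm Δ S]
        exact Nat.add_le_add_left (Nat.mul_le_mul_right Δ (Nat.sub_le S C)) _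
      · simp [Nat.sub_eq_zero_of_le h.le]
    calc (S - C) * S.descFactorial C * ((S + Δ) ^ C * (S + Δ))
        = ((S - C) * (S + Δ)) * (S.descFactorial C * (S + Δ) ^ C) := by ring
      _ ≤ ((S + Δ - C) * S) * ((S + Δ).descFactorial C * S ^ C) :=
          Nat.mul_le_mul key ih
      _ = (S + Δ - C) * (S + Δ).descFactorial C * (S ^ C * S) := by ring

/-- Lower first-order expansion of a shifted binomial coefficient: if `S ≥ 1` then
`choose (S+Δ) C ≥ choose S C · (1 + Δ/S)^C`. -/
theorem choose_add_ge (S Δ C : ℕ) (hS : 1 ≤ S) :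
    ((S + Δ).choose C : ℝ) ≥ (S.choose C : ℝ) * (1 + (Δ : ℝ) / S) ^ C := by
  have hS0 : (0 : ℝ) < S := by exact_mod_cast hS
  have h1 : (1 + (Δ : ℝ) / S) = (S + Δ) / S := by field_simp
  have hnat : S.choose C * (S + Δ) ^ C ≤ (S + Δ).choose C * S ^ C := by
    have := descFactorial_aux S Δ C
    rw [Nat.descFactorial_eq_factorial_mul_choose, Nat.descFactorial_eq_factorial_mul_choose] at this
    have hfac : 0 < C.factorial := Nat.factorial_pos C
    apply Nat.le_of_mul_le_mul_left _ hfac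
    calc C.factorial * (S.choose C * (S + Δ) ^ C)
        = C.factorial * S.choose C * (S + Δ) ^ C := by ring
      _ ≤ C.factorial * (S + Δ).choose C * S ^ C := this
      _ = C.factorial * ((S + Δ).choose C * S ^ C) := by ring
  rw [h1, div_pow, ge_iff_le, ← mul_div_assoc, div_le_iff₀ (by positivity)]
  exact_mod_cast hnat
end

section
/- Let S, Δ, C be natural numbers with S ≥ 2·C, 2·Δ ≤ S and S ≥ 1. Then the binomial coefficient satisfies (choose (S − Δ) C : ℝ) ≥ (choose S C : ℝ) · (1 − 2·Δ/S)^C. -/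
/-- Lower bound on the decrease of a binomial coefficient when its upper argument
decreases by `Δ`: if `S ≥ 2C`, `2Δ ≤ S` and `S ≥ 1` then
`choose (S−Δ) C ≥ choose S C · (1 − 2Δ/S)^C`. -/
theorem choose_sub_ge (S Δ C : ℕ) (h2C : 2 * C ≤ S) (hΔ : 2 * Δ ≤ S) (hS : 1 ≤ S) :
    ((S - Δ).choose C : ℝ) ≥ (S.choose C : ℝ) * (1 - 2 * (Δ : ℝ) / S) ^ C := by
  have hSpos : (0 : ℝ) < S := by exact_mod_cast hS
  have hdesc : S.descFactorial C * (S - 2 * Δ) ^ C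
      ≤ (S - Δ).descFactorial C * S ^ C := by
    have e1 : (S - 2 * Δ) ^ C = ∏ _i ∈ Finset.range C, (S - 2 * Δ) := by simp
    have e2 : S ^ C = ∏ _i ∈ Finset.range C, S := by simp
    rw [Nat.descFactorial_eq_prod_range, Nat.descFactorial_eq_prod_range, e1, e2,
      ← Finset.prod_mul_distrib, ← Finset.prod_mul_distrib]
    apply Finset.prod_le_prod'
    intro i hi
    simp only [Finset.mem_range] at hi
    have h1 : i ≤ S := by omega
    have h2 : 2 * Δ ≤ S := hΔ
    have h3 : Δ ≤ S := by omega
    have h4 : i ≤ S - Δ := by omega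
    have h5 : 2 * i ≤ S := by omega
    zify [h1, h2, h3, h4]
    nlinarith [mul_nonneg (Int.ofNat_nonneg Δ) (by omega : (0:ℤ) ≤ (S:ℤ) - 2 * i)]
  have key : S.choose C * (S - 2 * Δ) ^ C ≤ (S - Δ).choose C * S ^ C := by
    rw [Nat.descFactorial_eq_factorial_mul_choose, Nat.descFactorial_eq_factorial_mul_choose,
      mul_assoc, mul_assoc] at hdesc
    exact Nat.le_of_mul_le_mul_left hdesc (Nat.factorial_pos C)
  have hx : (1 - 2 * (Δ : ℝ) / S) = ((S - 2 * Δ : ℕ) : ℝ) / S := by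
    have : ((S - 2 * Δ : ℕ) : ℝ) = (S : ℝ) - 2 * Δ := by push_cast [hΔ]; ring
    rw [this]; field_simp
  rw [ge_iff_le, hx, div_pow, ← mul_div_assoc, div_le_iff₀ (by positivity)]
  exact_mod_cast key
end

section
/- Let s be a natural number, let x : Fin s → ℝ satisfy 0 ≤ x k ≤ 1 for all k, let C : Fin s → ℕ, and let N = ∑_k C k. Then ∏_k (1 + 2·x k)^(C k) ≤ 1 + 3^N · ∑_k x k. -/
lemma pow_aux (x : ℝ) (hx0 : 0 ≤ x) (hx1 : x ≤ 1) (C : ℕ) :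
    (1 + 2 * x) ^ C ≤ 1 + ((3 : ℝ) ^ C - 1) * x := by
  induction C with
  | zero => simp
  | succ n ih =>
    have h3 : (1:ℝ) ≤ 3 ^ n := one_le_pow₀ (by norm_num :(1:ℝ)≤3)
    calc (1 + 2 * x) ^ (n + 1) = (1 + 2 * x) ^ n * (1 + 2 * x) := pow_succ _ _
      _ ≤ (1 + ((3:ℝ) ^ n - 1) * x) * (1 + 2 * x) := by
          apply mul_le_mul_of_nonneg_right ih (by nlinarith)
      _ ≤ 1 + ((3:ℝ) ^ (n+1) - 1) * x := by
          rw [pow_succ]; nlinarith [mul_nonneg (sub_nonneg.2 h3) (mul_nonneg hx0 (sub_nonneg.2 hx1))]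

lemma prod_aux (s : ℕ) (x : Fin s → ℝ) (C : Fin s → ℕ)
    (hx : ∀ k, 0 ≤ x k ∧ x k ≤ 1) (t : Finset (Fin s)) :
    ∏ k ∈ t, (1 + 2 * x k) ^ C k ≤
      1 + ((3 : ℝ) ^ (∑ k ∈ t, C k) - 1) * ∑ k ∈ t, x k := by
  induction t using Finset.cons_induction with
  | empty => simp
  | cons a t ha ih =>
    rw [Finset.prod_cons, Finset.sum_cons, Finset.sum_cons]
    have h1 := pow_aux (x a) (hx a).1 (hx a).2 (C a)
    have hS : 0 ≤ ∑ k ∈ t, x k := Finset.sum_nonneg fun k _ => (hx k).1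
    have h3a : (1:ℝ) ≤ 3 ^ C a := one_le_pow₀ (by norm_num :(1:ℝ)≤3)
    have h3t : (1:ℝ) ≤ 3 ^ (∑ k ∈ t, C k) := one_le_pow₀ (by norm_num :(1:ℝ)≤3)
    have hpos : (0:ℝ) ≤ 1 + 2 * x a := by nlinarith [(hx a).1]
    calc (1 + 2 * x a) ^ C a * ∏ k ∈ t, (1 + 2 * x k) ^ C k
        ≤ (1 + ((3:ℝ) ^ C a - 1) * x a) *
            (1 + ((3:ℝ) ^ (∑ k ∈ t, C k) - 1) * ∑ k ∈ t, x k) := by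
          apply mul_le_mul h1 ih (Finset.prod_nonneg fun k _ => pow_nonneg (by nlinarith [(hx k).1]) _)
          nlinarith [(hx a).1]
      _ ≤ 1 + ((3:ℝ) ^ (C a + ∑ k ∈ t, C k) - 1) * (x a + ∑ k ∈ t, x k) := by
          rw [pow_add]
          nlinarith [(hx a).1, (hx a).2, mul_nonneg (mul_nonneg (sub_nonneg.2 h3a) (sub_nonneg.2 h3t)) (mul_nonneg hS (sub_nonneg.2 (hx a).2)), mul_nonneg (mul_nonneg (sub_nonneg.2 h3a) (sub_nonneg.2 h3t)) hS, mul_nonneg (sub_nonneg.2 h3a) (hx a).1, mul_nonneg (sub_nonneg.2 h3t) hS]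

/-- Linearization of a product of binomial-type factors: if `0 ≤ x k ≤ 1` for all `k`
and `N = ∑ k, C k`, then `∏ k, (1 + 2 x k)^(C k) ≤ 1 + 3^N · ∑ k, x k`. -/
theorem prod_pow_le_one_add (s : ℕ) (x : Fin s → ℝ) (C : Fin s → ℕ)
    (hx : ∀ k, 0 ≤ x k ∧ x k ≤ 1) :
    ∏ k, (1 + 2 * x k) ^ C k ≤ 1 + (3 : ℝ) ^ (∑ k, C k) * ∑ k, x k := by
  have h := prod_aux s x C hx Finset.univ
  have hS : 0 ≤ ∑ k, x k := Finset.sum_nonneg fun k _ => (hx k).1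
  nlinarith [h, hS]
end

section
/- Let s, d be natural numbers, C : Fin s → ℕ, r ≥ 0 a real number, and define the extended rate function ρ : (Fin s → ℤ) → ℝ by ρ(S) = r · ∏_k b(S k, C k), where b(a, c) = choose a.toNat c if a ≥ 0 and 0 otherwise. Let S : Fin s → ℤ, let O : Fin d → Fin s → ℤ be stoichiometry vectors with positive parts O⁺ j k = max(O j k, 0), and let e, e', e'' : Fin d → ℕ satisfy e' j + e'' j ≤ e j for all j. Then ρ(S + ∑_j (e' j) • O j + ∑_j (e'' j) • O⁺ j) ≤ ρ(S + ∑_j (e j) • O⁺ j). -/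
/-- Binomial coefficient extended to an integer upper argument: `0` when negative. -/
noncomputable def extBinom (a : ℤ) (c : ℕ) : ℝ :=
  if 0 ≤ a then (a.toNat.choose c : ℝ) else 0

/-- The extended rate function of a reaction with input counts `C` and rate constant
`r` at state `S`: `r · ∏ k, extBinom (S k) (C k)`. -/
noncomputable def extRate (s : ℕ) (C : Fin s → ℕ) (r : ℝ) (S : Fin s → ℤ) : ℝ :=
  r * ∏ k, extBinom (S k) (C k)

lemma extBinom_nonneg (a : ℤ) (c : ℕ) : 0 ≤ extBinom a c := by
  unfold extBinom; split <;> positivity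

lemma extBinom_mono {a b : ℤ} (h : a ≤ b) (c : ℕ) : extBinom a c ≤ extBinom b c := by
  unfold extBinom
  by_cases ha : 0 ≤ a
  · rw [if_pos ha, if_pos (ha.trans h)]
    exact_mod_cast Nat.choose_le_choose c (Int.toNat_le_toNat h)
  · rw [if_neg ha]
    split <;> positivity

/-- Inheritance of the upper-bound stopping condition C1 by the right child node:
applying `e'` full stoichiometry vectors and `e''` positive parts, with
`e' j + e'' j ≤ e j`, gives a rate at most that of applying `e` positive parts. -/
theorem extRate_right_child_upper (s d : ℕ) (C : Fin s → ℕ) (r : ℝ) (hr : 0 ≤ r)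
    (S : Fin s → ℤ) (O : Fin d → Fin s → ℤ) (e e' e'' : Fin d → ℕ)
    (he : ∀ j, e' j + e'' j ≤ e j) :
    extRate s C r (S + ∑ j, (e' j) • O j + ∑ j, (e'' j) • fun k => max (O j k) 0) ≤
      extRate s C r (S + ∑ j, (e j) • fun k => max (O j k) 0) := by
  unfold extRate
  apply mul_le_mul_of_nonneg_left _ hr
  apply Finset.prod_le_prod (fun k _ => extBinom_nonneg _ _)
  intro k _
  apply extBinom_mono
  simp only [Pi.add_apply, Finset.sum_apply, Pi.smul_apply, smul_eq_mul]
  have : ∀ j : Fin d, (e' j : ℤ) * O j k + (e'' j : ℤ) * max (O j k) 0 ≤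
      (e j : ℤ) * max (O j k) 0 := by
    intro j
    calc (e' j : ℤ) * O j k + (e'' j : ℤ) * max (O j k) 0
        ≤ (e' j : ℤ) * max (O j k) 0 + (e'' j : ℤ) * max (O j k) 0 := by
          gcongr
          · exact le_max_left _ _
      _ = ((e' j + e'' j : ℕ) : ℤ) * max (O j k) 0 := by push_cast; ring
      _ ≤ (e j : ℤ) * max (O j k) 0 := by
          apply mul_le_mul_of_nonneg_right _ (le_max_right _ _)
          exact_mod_cast he j
  calc S k + (∑ j, (e' j : ℤ) * O j k) + ∑ j, (e'' j : ℤ) * max (O j k) 0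
      = S k + ∑ j, ((e' j : ℤ) * O j k + (e'' j : ℤ) * max (O j k) 0) := by
        rw [Finset.sum_add_distrib]; ring
    _ ≤ S k + ∑ j, (e j : ℤ) * max (O j k) 0 := by
        gcongr with j; exact this j
end

section
/- Let s, d be natural numbers, C : Fin s → ℕ, r ≥ 0 a real number, and define the extended rate function ρ : (Fin s → ℤ) → ℝ by ρ(S) = r · ∏_k b(S k, C k), where b(a, c) = choose a.toNat c if a ≥ 0 and 0 otherwise. Let S : Fin s → ℤ, let O : Fin d → Fin s → ℤ be stoichiometry vectors with negative parts O⁻ j k = min(O j k, 0), let v : Fin s → ℤ be arbitrary, and let e, e', e'' : Fin d → ℕ satisfy e' j + e'' j ≤ e j for all j. Then ρ(S + ∑_j (e' j) • O j + ∑_j (e'' j) • O⁻ j + v) ≥ ρ(S + ∑_j (e j) • O⁻ j + v). -/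
/-- Inheritance of the lower-bound stopping condition C2 by the right child node:
applying `e'` full stoichiometry vectors and `e''` negative parts, with
`e' j + e'' j ≤ e j`, gives a rate at least that of applying `e` negative parts. -/
theorem extRate_right_child_lower (s d : ℕ) (C : Fin s → ℕ) (r : ℝ) (hr : 0 ≤ r)
    (S : Fin s → ℤ) (O : Fin d → Fin s → ℤ) (v : Fin s → ℤ) (e e' e'' : Fin d → ℕ)
    (he : ∀ j, e' j + e'' j ≤ e j) :
    extRate s C r (S + ∑ j, (e' j) • O j + (∑ j, (e'' j) • fun k => min (O j k) 0) + v) ≥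
      extRate s C r (S + (∑ j, (e j) • fun k => min (O j k) 0) + v) := by
  have hb_nonneg : ∀ (a : ℤ) (c : ℕ), 0 ≤ extBinom a c := by
    intro a c
    unfold extBinom
    split <;> positivity
  have hb_mono : ∀ (a b : ℤ) (c : ℕ), a ≤ b → extBinom a c ≤ extBinom b c := by
    intro a b c hab
    unfold extBinom
    by_cases ha : 0 ≤ a
    · rw [if_pos ha, if_pos (ha.trans hab)]
      exact_mod_cast Nat.choose_le_choose c (Int.toNat_le_toNat hab)
    · rw [if_neg ha]
      split <;> positivity
  unfold extRate
  apply mul_le_mul_of_nonneg_left _ hr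
  apply Finset.prod_le_prod (fun k _ => hb_nonneg _ _)
  intro k _
  apply hb_mono
  simp only [Pi.add_apply, Finset.sum_apply, Pi.smul_apply, smul_eq_mul, nsmul_eq_mul, Pi.mul_apply, Pi.natCast_apply]
  have key : ∑ j, (e j : ℤ) * min (O j k) 0 ≤
      ∑ j, (e' j : ℤ) * O j k + ∑ j, (e'' j : ℤ) * min (O j k) 0 := by
    rw [← Finset.sum_add_distrib]
    apply Finset.sum_le_sum
    intro j _
    have hm : min (O j k) 0 ≤ 0 := min_le_right _ _
    have hmo : min (O j k) 0 ≤ O j k := min_le_left _ _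
    have h1 : (e j : ℤ) * min (O j k) 0 ≤ ((e' j + e'' j : ℕ) : ℤ) * min (O j k) 0 := by
      apply mul_le_mul_of_nonpos_right _ hm
      exact_mod_cast he j
    have h2 : ((e' j + e'' j : ℕ) : ℤ) * min (O j k) 0
        ≤ (e' j : ℤ) * O j k + (e'' j : ℤ) * min (O j k) 0 := by
      push_cast
      rw [add_mul]
      gcongr
    exact h1.trans h2
  linarith
end

section
/- Let λ > 0 and p ∈ [0, 1] be real numbers and let k be a natural number. Then ∑_{n=k}^∞ poissonPMFReal λ n · (choose n k) · p^k · (1−p)^(n−k) = poissonPMFReal (p·λ) k; that is, binomial thinning of a Poisson random variable with rate λ by probability p yields a Poisson random variable with rate p·λ. -/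
/-!
Writing `n = k + m`, the factor `(k + m)! / (k! m!)` of `choose (k + m) k` splits the summand
into `exp (-λ) (pλ)^k / k!` times `((1 - p)λ)^m / m!`; the sum over `m` of the second factor is
the exponential series of `(1 - p)λ`, and `exp (-λ) · exp ((1 - p)λ) = exp (-pλ)`.
-/

theorem Real.hasSum_pow_div_factorial_exp (x : ℝ) :
    HasSum (fun n : ℕ => x ^ n / n.factorial) (Real.exp x) := by
  rw [Real.exp_eq_exp_ℝ]
  exact NormedSpace.expSeries_div_hasSum_exp x

theorem poissonPMFReal_add_mul_choose (l : ℝ) (k m : ℕ) :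
    poissonPMFReal l (k + m) * ((k + m).choose k : ℝ)
      = poissonPMFReal l k * (l ^ m / m.factorial) := by
  have hchoose : ((k + m).choose k : ℝ) * k.factorial * m.factorial = (k + m).factorial := by
    rw [Nat.choose_symm_add]
    exact_mod_cast Nat.add_choose_mul_factorial_mul_factorial k m
  have hc : ((k + m).choose k : ℝ) ≠ 0 := by
    exact_mod_cast (Nat.choose_pos (Nat.le_add_right k m)).ne'
  rw [poissonPMFReal, poissonPMFReal, ← hchoose, pow_add]
  field_simp

theorem poissonPMFReal_mul_pow_mul_exp (l p : ℝ) (k : ℕ) :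
    poissonPMFReal l k * p ^ k * Real.exp ((1 - p) * l) = poissonPMFReal (p * l) k := by
  have hexp : Real.exp (-l) * Real.exp ((1 - p) * l) = Real.exp (-(p * l)) := by
    rw [← Real.exp_add]
    ring_nf
  rw [poissonPMFReal, poissonPMFReal, mul_pow, ← hexp]
  ring

theorem poisson_thinning_general (l p : ℝ) (k : ℕ) :
    (∑' m : ℕ, poissonPMFReal l (k + m) * ((k + m).choose k : ℝ) * p ^ k * (1 - p) ^ m)
      = poissonPMFReal (p * l) k := by
  have hsummand : ∀ m : ℕ,
      poissonPMFReal l (k + m) * ((k + m).choose k : ℝ) * p ^ k * (1 - p) ^ m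
        = poissonPMFReal l k * p ^ k * (((1 - p) * l) ^ m / m.factorial) := by
    intro m
    rw [poissonPMFReal_add_mul_choose, mul_pow]
    ring
  simp_rw [hsummand]
  rw [((Real.hasSum_pow_div_factorial_exp _).mul_left _).tsum_eq]
  exact poissonPMFReal_mul_pow_mul_exp l p k

/-- Binomial thinning of a Poisson random variable with rate `λ` by probability `p`
yields a Poisson random variable with rate `p·λ`:
`∑_{n=k}^∞ poissonPMFReal λ n · choose n k · p^k · (1−p)^(n−k) = poissonPMFReal (p·λ) k`
(the sum is indexed by `n = k + m`). -/
theorem poisson_thinning (l p : ℝ) (hl : 0 < l) (hp0 : 0 ≤ p) (hp1 : p ≤ 1) (k : ℕ) :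
    (∑' m : ℕ, poissonPMFReal l (k + m) * ((k + m).choose k : ℝ) * p ^ k * (1 - p) ^ m)
      = poissonPMFReal (p * l) k :=
  poisson_thinning_general l p k
end
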